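/- The isotropy group of Γ₀ (with Γ₀,₁₁¹ = -1, Γ₀,₁₂² = Γ₀,₂₁² = Γ₀,₂₂¹ = 1, others 0) in GL⁺(2,ℝ) under the change-of-basis action contains the rotation by angle 2π/3; i.e., if R is the rotation matrix ((cos(2π/3), -sin(2π/3)), (sin(2π/3), cos(2π/3))), then RΓ₀ = Γ₀. -/
import Mathlib


open Finset Matrix

/-- Ricci tensor of constant Christoffel symbols on ℝ². -/
def Ricci (Γ : Fin 2 → Fin 2 → Fin 2 → ℝ) (j k : Fin 2) : ℝ :=
  ∑ i, ∑ n, (Γ i n i * Γ j k n - Γ j n i * Γ i k n)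

/-- symmetric Ricci tensor -/
noncomputable def RicciS (Γ : Fin 2 → Fin 2 → Fin 2 → ℝ) (j k : Fin 2) : ℝ :=
  (Ricci Γ j k + Ricci Γ k j) / 2

/-- The change-of-basis action of `GL(2,ℝ)` on constant Christoffel symbols:
`(gΓ)_{ij}^k = g^k_m Γ_{pq}^m (g⁻¹)^p_i (g⁻¹)^q_j`. -/
def act (g : GL (Fin 2) ℝ) (Γ : Fin 2 → Fin 2 → Fin 2 → ℝ) :
    Fin 2 → Fin 2 → Fin 2 → ℝ := fun i j k =>
  ∑ m, ∑ p, ∑ q,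
    (g : Matrix (Fin 2) (Fin 2) ℝ) k m * Γ p q m *
      ((g⁻¹ : GL (Fin 2) ℝ) : Matrix (Fin 2) (Fin 2) ℝ) p i *
      ((g⁻¹ : GL (Fin 2) ℝ) : Matrix (Fin 2) (Fin 2) ℝ) q j

/-- The exceptional structure Γ₀. -/
noncomputable def Γ₀ : Fin 2 → Fin 2 → Fin 2 → ℝ := fun i j k =>
  if i = 0 ∧ j = 0 ∧ k = 0 then -1
  else if (i = 0 ∧ j = 1 ∧ k = 1) ∨ (i = 1 ∧ j = 0 ∧ k = 1) ∨ (i = 1 ∧ j = 1 ∧ k = 0)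
    then 1 else 0

open Real in
set_option maxHeartbeats 2000000 in
open Real in
/-- The rotation by `2π/3` fixes `Γ₀` under the change-of-basis action. -/
theorem stmt13 (R : GL (Fin 2) ℝ)
    (hR : (R : Matrix (Fin 2) (Fin 2) ℝ) =
      !![cos (2 * π / 3), -sin (2 * π / 3); sin (2 * π / 3), cos (2 * π / 3)]) :
    act R Γ₀ = Γ₀ := by
  have hc : Real.cos (2 * π / 3) = -(1/2) := by
    have h : (2 * π / 3) = π - π/3 := by ring
    rw [h, Real.cos_pi_sub, Real.cos_pi_div_three]
  have hs : Real.sin (2 * π / 3) = Real.sqrt 3 / 2 := by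
    have h : (2 * π / 3) = π - π/3 := by ring
    rw [h, Real.sin_pi_sub, Real.sin_pi_div_three]
  have h3 : Real.sqrt 3 * Real.sqrt 3 = 3 :=
    Real.mul_self_sqrt (by norm_num)
  have hinv : ((R⁻¹ : GL (Fin 2) ℝ) : Matrix (Fin 2) (Fin 2) ℝ) =
      !![cos (2 * π / 3), sin (2 * π / 3); -sin (2 * π / 3), cos (2 * π / 3)] := by
    have h1 : (R : Matrix (Fin 2) (Fin 2) ℝ) *
        !![cos (2 * π / 3), sin (2 * π / 3); -sin (2 * π / 3), cos (2 * π / 3)] = 1 := by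
      rw [hR, hc, hs]
      ext i j
      fin_cases i <;> fin_cases j <;>
        simp [Matrix.mul_apply, Fin.sum_univ_two] <;> nlinarith [h3]
    calc ((R⁻¹ : GL (Fin 2) ℝ) : Matrix (Fin 2) (Fin 2) ℝ)
        = ((R⁻¹ : GL (Fin 2) ℝ) : Matrix (Fin 2) (Fin 2) ℝ) *
          ((R : Matrix (Fin 2) (Fin 2) ℝ) *
            !![cos (2 * π / 3), sin (2 * π / 3); -sin (2 * π / 3), cos (2 * π / 3)]) := by
          rw [h1, mul_one]
      _ = !![cos (2 * π / 3), sin (2 * π / 3); -sin (2 * π / 3), cos (2 * π / 3)] := by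
          rw [← mul_assoc, ← Units.val_mul, inv_mul_cancel, Units.val_one, one_mul]
  have h33 : Real.sqrt 3 * Real.sqrt 3 * Real.sqrt 3 = 3 * Real.sqrt 3 := by
    rw [h3]
  funext i j k
  fin_cases i <;> fin_cases j <;> fin_cases k <;>
    simp only [act, Γ₀, hR, hinv, hc, hs, Fin.sum_univ_two, Fin.isValue] <;>
    norm_num [Matrix.cons_val_zero, Matrix.cons_val_one, Matrix.head_cons] <;>
    nlinarith [h3, h33]
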